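/- arXiv:2309.12773 — 4 statements merged into one kernel-verified Lean document; each statement's English description precedes it below -/
import Mathlib

section
/- Let τ > 0 and let w ∈ L²(ℝ) be real-valued. Then for every φ ∈ C_c^∞(ℝ): |∫_ℝ (−w(x)·φ'(x) + 2τ·w(x)·φ(x) + w(x)²·φ(x)) dx| ≤ (2 + τ^{−1/2}·‖w‖_{L²})·‖w‖_{L²}·(∫_ℝ (φ'(x)² + τ²·φ(x)²) dx)^{1/2}. Equivalently, the distribution u = w' + 2τw + w² (the modified Miura image of w) satisfies ‖u‖_{H^{−1}_τ} ≤ (2 + τ^{−1/2}‖w‖_{L²})·‖w‖_{L²}. -/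
open MeasureTheory

/-!
The pairing splits as `∫ w (2τφ - φ') + ∫ w² φ`. Since `∫ φ φ' = 0`, the `L²` norm of
`2τφ - φ'` is `(4τ²‖φ‖₂² + ‖φ'‖₂²)^{1/2} ≤ 2‖φ‖_{H¹_τ}`, and Cauchy–Schwarz bounds the first
term by `2‖w‖₂‖φ‖_{H¹_τ}`. For the second, `φ(x)² = ∫_{-∞}^x (φ²)' ≤ ∫ 2|φ φ'| ≤ ‖φ‖²_{H¹_τ}/τ`
by AM-GM, so `|∫ w² φ| ≤ τ^{-1/2}‖φ‖_{H¹_τ}‖w‖₂²`.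
-/

section

variable {α : Type*} [MeasurableSpace α] {μ : Measure α}

theorem abs_integral_mul_le_sqrt_mul_sqrt {f g : α → ℝ} (hf : MemLp f 2 μ) (hg : MemLp g 2 μ) :
    |∫ x, f x * g x ∂μ| ≤ √(∫ x, f x ^ 2 ∂μ) * √(∫ x, g x ^ 2 ∂μ) := by
  have h2 : ENNReal.ofReal 2 = 2 := by simp
  have holder := integral_mul_norm_le_Lp_mul_Lq (μ := μ) Real.HolderConjugate.two_two
    (h2 ▸ hf) (h2 ▸ hg)
  simp only [Real.norm_eq_abs, show (2 : ℝ) = (2 : ℕ) by norm_num, Real.rpow_natCast, sq_abs]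
    at holder
  calc |∫ x, f x * g x ∂μ| ≤ ∫ x, |f x| * |g x| ∂μ := by
        simpa only [abs_mul] using
          abs_integral_le_integral_abs (f := fun x => f x * g x) (μ := μ)
    _ ≤ _ := by simpa only [Real.sqrt_eq_rpow, Nat.cast_ofNat] using holder

theorem abs_integral_mul_le_of_abs_le {f φ : α → ℝ} {C : ℝ} (hf : Integrable f μ)
    (hf0 : 0 ≤ f) (hφ : ∀ x, |φ x| ≤ C) :
    |∫ x, f x * φ x ∂μ| ≤ C * ∫ x, f x ∂μ := by
  rw [← integral_const_mul, ← Real.norm_eq_abs]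
  refine norm_integral_le_of_norm_le (hf.const_mul C) (.of_forall fun x => ?_)
  rw [Real.norm_eq_abs, abs_mul, abs_of_nonneg (hf0 x), mul_comm]
  exact mul_le_mul_of_nonneg_right (hφ x) (hf0 x)

end

theorem deriv_sq_eq {φ : ℝ → ℝ} (hφ : Differentiable ℝ φ) (x : ℝ) :
    deriv (fun y => φ y ^ 2) x = 2 * φ x * deriv φ x := by
  simp [hφ x]

/-- The squared norm of `H¹_τ(ℝ)`, the predual of `H^{-1}_τ`. -/
noncomputable def h1NormSq (τ : ℝ) (φ : ℝ → ℝ) : ℝ :=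
  ∫ x, (deriv φ x ^ 2 + τ ^ 2 * φ x ^ 2)

namespace HasCompactSupport

variable {φ : ℝ → ℝ} {τ : ℝ}

theorem sq (hc : HasCompactSupport φ) : HasCompactSupport (fun x => φ x ^ 2) :=
  hc.comp_left (g := fun t : ℝ => t ^ 2) (zero_pow two_ne_zero)

theorem memLp_deriv (hφ : ContDiff ℝ 1 φ) (hc : HasCompactSupport φ) (p : ENNReal) :
    MemLp (deriv φ) p :=
  (hφ.continuous_deriv le_rfl).memLp_of_hasCompactSupport hc.deriv

theorem integrable_deriv (hφ : ContDiff ℝ 1 φ) (hc : HasCompactSupport φ) :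
    Integrable (deriv φ) :=
  (hφ.continuous_deriv le_rfl).integrable_of_hasCompactSupport hc.deriv

theorem integral_deriv_eq_zero (hφ : ContDiff ℝ 1 φ) (hc : HasCompactSupport φ) :
    ∫ x, deriv φ x = 0 :=
  integral_eq_zero_of_hasDerivAt_of_integrable
    (fun x => (hφ.differentiable one_ne_zero x).hasDerivAt) (hc.integrable_deriv hφ)
    (hφ.continuous.integrable_of_hasCompactSupport hc)

theorem le_integral_abs_deriv (hφ : ContDiff ℝ 1 φ) (hc : HasCompactSupport φ) (x : ℝ) :
    φ x ≤ ∫ y, |deriv φ y| := by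
  have hint := hc.integrable_deriv hφ
  calc φ x = ∫ y in Set.Iic x, deriv φ y := (hc.integral_Iic_deriv_eq hφ x).symm
    _ ≤ ∫ y in Set.Iic x, |deriv φ y| :=
        integral_mono hint.integrableOn hint.abs.integrableOn fun y => le_abs_self _
    _ ≤ ∫ y, |deriv φ y| := setIntegral_le_integral hint.abs (.of_forall fun _ => abs_nonneg _)

theorem integral_mul_deriv_self_eq_zero (hφ : ContDiff ℝ 1 φ) (hc : HasCompactSupport φ) :
    ∫ x, φ x * deriv φ x = 0 := by
  calc ∫ x, φ x * deriv φ x = ∫ x, deriv (fun y => φ y ^ 2) x / 2 := by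
        simp only [deriv_sq_eq (hφ.differentiable one_ne_zero)]; congr 1; ext x; ring
    _ = 0 := by rw [integral_div, integral_deriv_eq_zero (hφ.pow 2) hc.sq, zero_div]

theorem integrable_h1NormSq_integrand (hφ : ContDiff ℝ 1 φ) (hc : HasCompactSupport φ) :
    Integrable (fun x => deriv φ x ^ 2 + τ ^ 2 * φ x ^ 2) :=
  (hc.memLp_deriv hφ 2).integrable_sq.add
    ((hφ.continuous.memLp_of_hasCompactSupport hc).integrable_sq.const_mul _)

theorem sq_le_h1NormSq_div (hτ : 0 < τ) (hφ : ContDiff ℝ 1 φ) (hc : HasCompactSupport φ)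
    (x : ℝ) : φ x ^ 2 ≤ h1NormSq τ φ / τ := by
  have amgm (y : ℝ) : |deriv (fun y => φ y ^ 2) y| ≤ (deriv φ y ^ 2 + τ ^ 2 * φ y ^ 2) / τ := by
    rw [deriv_sq_eq (hφ.differentiable one_ne_zero), le_div_iff₀ hτ, abs_mul, abs_mul, abs_two]
    nlinarith [sq_nonneg (|deriv φ y| - τ * |φ y|), sq_abs (deriv φ y), sq_abs (φ y)]
  calc φ x ^ 2 ≤ ∫ y, |deriv (fun y => φ y ^ 2) y| := le_integral_abs_deriv (hφ.pow 2) hc.sq x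
    _ ≤ ∫ y, (deriv φ y ^ 2 + τ ^ 2 * φ y ^ 2) / τ :=
        integral_mono (hc.sq.integrable_deriv (hφ.pow 2)).abs
          ((hc.integrable_h1NormSq_integrand hφ).div_const τ) amgm
    _ = h1NormSq τ φ / τ := integral_div τ _

theorem abs_le_rpow_mul_sqrt_h1NormSq (hτ : 0 < τ) (hφ : ContDiff ℝ 1 φ)
    (hc : HasCompactSupport φ) (x : ℝ) : |φ x| ≤ τ ^ (-(1 : ℝ) / 2) * √(h1NormSq τ φ) := by
  rw [← Real.sqrt_sq_eq_abs, neg_div, Real.rpow_neg hτ.le, ← Real.sqrt_eq_rpow,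
    inv_mul_eq_div, ← Real.sqrt_div' _ hτ.le]
  exact Real.sqrt_le_sqrt (hc.sq_le_h1NormSq_div hτ hφ x)

theorem integral_two_mul_sub_deriv_sq_le (hφ : ContDiff ℝ 1 φ) (hc : HasCompactSupport φ) :
    ∫ x, (2 * τ * φ x - deriv φ x) ^ 2 ≤ 4 * h1NormSq τ φ := by
  have hφ2 : MemLp φ 2 := hφ.continuous.memLp_of_hasCompactSupport hc
  have hφ'2 := hc.memLp_deriv hφ 2
  have hdiag : Integrable (fun x => 4 * τ ^ 2 * φ x ^ 2 + deriv φ x ^ 2) :=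
    (hφ2.integrable_sq.const_mul _).add hφ'2.integrable_sq
  have hcross : Integrable (fun x => 4 * τ * (φ x * deriv φ x)) :=
    (hφ2.integrable_mul hφ'2).const_mul _
  calc ∫ x, (2 * τ * φ x - deriv φ x) ^ 2
      = (∫ x, (4 * τ ^ 2 * φ x ^ 2 + deriv φ x ^ 2)) - ∫ x, 4 * τ * (φ x * deriv φ x) := by
        rw [← integral_sub hdiag hcross]; congr 1; ext x; ring
    _ = ∫ x, (4 * τ ^ 2 * φ x ^ 2 + deriv φ x ^ 2) := by
        rw [integral_const_mul, hc.integral_mul_deriv_self_eq_zero hφ, mul_zero, sub_zero]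
    _ ≤ ∫ x, 4 * (deriv φ x ^ 2 + τ ^ 2 * φ x ^ 2) :=
        integral_mono hdiag ((hc.integrable_h1NormSq_integrand hφ).const_mul 4) fun x => by
          nlinarith [sq_nonneg (deriv φ x)]
    _ = 4 * h1NormSq τ φ := integral_const_mul _ _

theorem sqrt_integral_two_mul_sub_deriv_sq_le (hφ : ContDiff ℝ 1 φ)
    (hc : HasCompactSupport φ) :
    √(∫ x, (2 * τ * φ x - deriv φ x) ^ 2) ≤ 2 * √(h1NormSq τ φ) := by
  calc √(∫ x, (2 * τ * φ x - deriv φ x) ^ 2) ≤ √(2 ^ 2 * h1NormSq τ φ) :=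
        Real.sqrt_le_sqrt (by linarith [hc.integral_two_mul_sub_deriv_sq_le (τ := τ) hφ])
    _ = 2 * √(h1NormSq τ φ) := by rw [Real.sqrt_mul (by norm_num), Real.sqrt_sq zero_le_two]

end HasCompactSupport

/-- The modified Miura image `u = w' + 2τw + w²` of `w ∈ L²(ℝ)` satisfies
`‖u‖_{H^{-1}_τ} ≤ (2 + τ^{-1/2}‖w‖_{L²})‖w‖_{L²}`, expressed through the pairing
with compactly supported smooth test functions. -/
theorem stmt_1 (τ : ℝ) (hτ : 0 < τ) (w : ℝ → ℝ)
    (hw : MemLp w 2 (volume : Measure ℝ)) :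
    ∀ φ : ℝ → ℝ, ContDiff ℝ (⊤ : ℕ∞) φ → HasCompactSupport φ →
      |∫ x : ℝ, (-(w x) * deriv φ x + 2 * τ * w x * φ x + (w x) ^ 2 * φ x)|
        ≤ (2 + τ ^ (-(1 : ℝ) / 2) * Real.sqrt (∫ x : ℝ, (w x) ^ 2))
            * Real.sqrt (∫ x : ℝ, (w x) ^ 2)
            * Real.sqrt (∫ x : ℝ, ((deriv φ x) ^ 2 + τ ^ 2 * (φ x) ^ 2)) := by
  intro φ hφ hc
  have hφ1 : ContDiff ℝ 1 φ := hφ.of_le (by exact_mod_cast le_top)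
  change _ ≤ _ * _ * √(h1NormSq τ φ)
  set W := √(∫ x, w x ^ 2)
  have hg : MemLp (fun x => 2 * τ * φ x - deriv φ x) 2 :=
    ((hφ1.continuous.memLp_of_hasCompactSupport hc).const_mul _).sub (hc.memLp_deriv hφ1 2)
  have hbound := hc.abs_le_rpow_mul_sqrt_h1NormSq hτ hφ1
  have hw2 : Integrable (fun x => w x ^ 2) := hw.integrable_sq
  have hsplit : ∫ x, (-(w x) * deriv φ x + 2 * τ * w x * φ x + w x ^ 2 * φ x)
      = (∫ x, w x * (2 * τ * φ x - deriv φ x)) + ∫ x, w x ^ 2 * φ x := by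
    have hwg : Integrable (fun x => w x * (2 * τ * φ x - deriv φ x)) := hw.integrable_mul hg
    rw [← integral_add hwg
      ((hw2.bdd_mul hφ1.continuous.aestronglyMeasurable (.of_forall hbound)).congr
        (.of_forall fun x => mul_comm _ _))]
    congr 1; ext x; ring
  have hlin : |∫ x, w x * (2 * τ * φ x - deriv φ x)| ≤ W * (2 * √(h1NormSq τ φ)) :=
    (abs_integral_mul_le_sqrt_mul_sqrt hw hg).trans <| mul_le_mul_of_nonneg_left
      (hc.sqrt_integral_two_mul_sub_deriv_sq_le hφ1) (Real.sqrt_nonneg _)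
  have hquad : |∫ x, w x ^ 2 * φ x| ≤ τ ^ (-(1 : ℝ) / 2) * √(h1NormSq τ φ) * W ^ 2 := by
    rw [Real.sq_sqrt (integral_nonneg fun x => sq_nonneg _)]
    exact abs_integral_mul_le_of_abs_le hw2 (fun x => sq_nonneg _) hbound
  calc _ ≤ |∫ x, w x * (2 * τ * φ x - deriv φ x)| + |∫ x, w x ^ 2 * φ x| :=
        hsplit ▸ abs_add_le _ _
    _ ≤ _ := by linarith
end

section
/- There is an absolute constant C > 0 such that: whenever w, v, g ∈ L²((−2,2)) are real-valued and satisfy the Riccati equation w' + 2w + w² = v' + g in the sense of distributions on (−2,2), that is, ∫ (−w·φ' + (2w + w²)·φ) dx = ∫ (−v·φ' + g·φ) dx for all φ ∈ C_c^∞((−2,2)), then ‖w‖_{L²((−1,1))} ≤ C·(1 + ‖v‖_{L²((−2,2))} + ‖g‖_{L²((−2,2))}). -/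
/-!
Test the equation against `φ = ψ²`, where `ψ` is a smooth cutoff equal to `1` on `(-1, 1)`.
Then `∫ w² ψ² = ∫ (-v φ' + g φ + w φ' - 2 w φ)`, and since `φ' = 2 ψ ψ'` every term on the right
is a product of `ψ` with `w`, `v` or `g`; Young's inequality bounds it by `½ ∫ w² ψ² + ∫ v² + ∫ g²`
plus a constant depending only on `ψ`. The coercive sign of the quadratic term `w²` lets the
first summand be absorbed, so no smallness of the data is needed.
-/

open MeasureTheory Set

lemma sqrt_le_sqrt_mul_one_add_sqrt_add_sqrt {x K a b : ℝ} (hK : 0 ≤ K) (ha : 0 ≤ a)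
    (hb : 0 ≤ b) (h : x ≤ K * (1 + a + b)) : √x ≤ √K * (1 + √a + √b) := by
  have hsum : √(1 + a + b) ≤ 1 + √a + √b := by
    rw [Real.sqrt_le_left (by positivity)]
    nlinarith [Real.sq_sqrt ha, Real.sq_sqrt hb, Real.sqrt_nonneg a, Real.sqrt_nonneg b]
  calc √x ≤ √(K * (1 + a + b)) := Real.sqrt_le_sqrt h
    _ = √K * √(1 + a + b) := Real.sqrt_mul hK _
    _ ≤ √K * (1 + √a + √b) := by gcongr

lemma setIntegral_le_setIntegral_mul_sq_of_eqOn_one {α : Type*} [MeasurableSpace α]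
    {μ : Measure α} {f ψ : α → ℝ} {s t : Set α} (hs : MeasurableSet s) (hst : s ⊆ t)
    (hf : 0 ≤ f) (hψ : EqOn ψ 1 s) (hint : IntegrableOn (fun x => f x * ψ x ^ 2) t μ) :
    ∫ x in s, f x ∂μ ≤ ∫ x in t, f x * ψ x ^ 2 ∂μ :=
  calc ∫ x in s, f x ∂μ = ∫ x in s, f x * ψ x ^ 2 ∂μ :=
        setIntegral_congr_fun hs fun x hx => by simp [hψ hx]
    _ ≤ ∫ x in t, f x * ψ x ^ 2 ∂μ :=
        setIntegral_mono_set hint (ae_of_all _ fun x => mul_nonneg (hf x) (sq_nonneg _))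
          hst.eventuallyLE

lemma MeasureTheory.Integrable.mul_of_hasCompactSupport {X : Type*} [TopologicalSpace X]
    [MeasurableSpace X] [OpensMeasurableSpace X] {μ : Measure X} {f φ : X → ℝ} (hf : Integrable f μ)
    (hφ : Continuous φ) (hφc : HasCompactSupport φ) : Integrable (fun x => f x * φ x) μ :=
  hf.mul_of_top_left (hφ.memLp_top_of_hasCompactSupport hφc μ)

lemma integral_le_two_mul_integral_of_absorb {α : Type*} [MeasurableSpace α] {μ : Measure α}
    {A F G H E : α → ℝ} (hF : Integrable F μ) (hG : Integrable G μ) (hH : Integrable H μ)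
    (hE : Integrable E μ) (hA : ∀ x, A x = F x + H x) (hFG : ∫ x, F x ∂μ = ∫ x, G x ∂μ)
    (hGH : ∀ x, G x + H x ≤ A x / 2 + E x) :
    ∫ x, A x ∂μ ≤ 2 * ∫ x, E x ∂μ := by
  have hA_int : Integrable A μ := (hF.add hH).congr (ae_of_all _ fun x => (hA x).symm)
  have hA_eq : ∫ x, A x ∂μ = ∫ x, (G x + H x) ∂μ := by
    rw [integral_congr_ae (ae_of_all _ hA), integral_add hF hH, hFG, integral_add hG hH]
  have hA_le : ∫ x, (G x + H x) ∂μ ≤ ∫ x, (A x / 2 + E x) ∂μ :=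
    integral_mono (hG.add hH) ((hA_int.div_const 2).add hE) hGH
  rw [integral_add (hA_int.div_const 2) hE, integral_div] at hA_le
  linarith

/-- What is left of the cutoff `ψ` after Young's inequality has absorbed every `w`-term of the
tested equation into `∫ w² ψ² / 2`. -/
noncomputable def cutoffWeight (ψ : ℝ → ℝ) (x : ℝ) : ℝ :=
  4 * deriv ψ x ^ 2 + 4 * ψ x ^ 2 + ψ x ^ 2 * deriv ψ x ^ 2 + ψ x ^ 4

lemma cutoffWeight_nonneg (ψ : ℝ → ℝ) (x : ℝ) : 0 ≤ cutoffWeight ψ x := by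
  unfold cutoffWeight; positivity

lemma HasCompactSupport.cutoffWeight {ψ : ℝ → ℝ} (hψ : HasCompactSupport ψ) :
    HasCompactSupport (cutoffWeight ψ) :=
  hψ.mono' fun x hx => by
    by_contra h
    have h0 : ψ x = 0 := image_eq_zero_of_notMem_tsupport h
    have h1 : deriv ψ x = 0 := Function.notMem_support.mp fun h' => h (support_deriv_subset h')
    simp [_root_.cutoffWeight, h0, h1] at hx

lemma riccati_residual_le (w v g p q : ℝ) :
    -v * (2 * p * q) + g * p ^ 2 + (w * (2 * p * q) - 2 * (w * p ^ 2))
      ≤ w ^ 2 * p ^ 2 / 2 + (v ^ 2 + g ^ 2 + (4 * q ^ 2 + 4 * p ^ 2 + p ^ 2 * q ^ 2 + p ^ 4)) := by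
  nlinarith [sq_nonneg (v + p * q), sq_nonneg (g - p ^ 2 / 2), sq_nonneg (w * p / 2 - 2 * q),
    sq_nonneg (w * p / 2 + 2 * p)]

theorem integral_sq_mul_sq_le_of_riccati {μ : Measure ℝ} [IsFiniteMeasure μ]
    {w v g ψ : ℝ → ℝ} (hw : MemLp w 2 μ) (hv : MemLp v 2 μ)
    (hg : MemLp g 2 μ) (hψ : ContDiff ℝ 1 ψ) (hψc : HasCompactSupport ψ)
    (heq : ∫ x, (-(w x) * deriv (fun y => ψ y ^ 2) x + (2 * w x + w x ^ 2) * ψ x ^ 2) ∂μ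
      = ∫ x, (-(v x) * deriv (fun y => ψ y ^ 2) x + g x * ψ x ^ 2) ∂μ) :
    ∫ x, w x ^ 2 * ψ x ^ 2 ∂μ
      ≤ 2 * (∫ x, v x ^ 2 ∂μ + ∫ x, g x ^ 2 ∂μ + ∫ x, cutoffWeight ψ x ∂μ) := by
  have hφ' : deriv (fun y => ψ y ^ 2) = fun x => 2 * ψ x * deriv ψ x :=
    funext fun x => by simp [hψ.differentiable one_ne_zero x]
  rw [hφ'] at heq
  have hψ' : Continuous (deriv ψ) := hψ.continuous_deriv le_rfl
  have hmc : HasCompactSupport fun x => 2 * ψ x * deriv ψ x :=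
    (hψc.mul_left (f := fun _ => (2 : ℝ))).mul_right (f' := deriv ψ)
  have hpc : HasCompactSupport fun x => ψ x ^ 2 := hψc.comp_left (g := fun y => y ^ 2) (by simp)
  have hwm := (hw.integrable one_le_two).mul_of_hasCompactSupport (by fun_prop) hmc
  have hwp := (hw.integrable one_le_two).mul_of_hasCompactSupport (by fun_prop) hpc
  have hw2p := hw.integrable_sq.mul_of_hasCompactSupport (by fun_prop) hpc
  have hvm := (hv.integrable one_le_two).mul_of_hasCompactSupport (by fun_prop) hmc
  have hgp := (hg.integrable one_le_two).mul_of_hasCompactSupport (by fun_prop) hpc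
  have hB : Integrable (cutoffWeight ψ) μ :=
    (by unfold cutoffWeight; fun_prop : Continuous (cutoffWeight ψ)).integrable_of_hasCompactSupport
      hψc.cutoffWeight
  have hvg : Integrable (fun x => v x ^ 2 + g x ^ 2) μ := hv.integrable_sq.add hg.integrable_sq
  have hE : Integrable (fun x => v x ^ 2 + g x ^ 2 + cutoffWeight ψ x) μ := hvg.add hB
  set H := fun x => w x * (2 * ψ x * deriv ψ x) - 2 * (w x * ψ x ^ 2)
  have hH : Integrable H μ := hwm.sub (hwp.const_mul 2)
  have habsorb := integral_le_two_mul_integral_of_absorb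
    ((hw2p.sub hH).congr (ae_of_all _ fun x => by simp only [H, Pi.sub_apply]; ring))
    ((hvm.neg.add hgp).congr (ae_of_all _ fun x => by simp only [Pi.add_apply, Pi.neg_apply]; ring))
    hH hE (fun x => by simp only [H]; ring) heq
    fun x => riccati_residual_le (w x) (v x) (g x) (ψ x) (deriv ψ x)
  rwa [integral_add hvg hB, integral_add hv.integrable_sq hg.integrable_sq] at habsorb

lemma exists_smooth_cutoff_Ioo {r R : ℝ} (hr : 0 < r) (hrR : r < R) :
    ∃ ψ : ℝ → ℝ, ContDiff ℝ (⊤ : ℕ∞) ψ ∧ HasCompactSupport ψ ∧ tsupport ψ ⊆ Ioo (-R) R ∧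
      EqOn ψ 1 (Icc (-r) r) := by
  let b : ContDiffBump (0 : ℝ) := ⟨r, (r + R) / 2, hr, by linarith⟩
  refine ⟨b, b.contDiff, b.hasCompactSupport, ?_, fun x hx => b.one_of_mem_closedBall ?_⟩
  · rw [b.tsupport_eq, Real.closedBall_eq_Icc]
    exact Icc_subset_Ioo (by simp only [b]; linarith) (by simp only [b]; linarith)
  · simpa [Real.closedBall_eq_Icc, b] using hx

/-- Large-data local a priori bound for the Riccati equation `w' + 2w + w² = v' + g`
(distributionally on `(-2,2)`, with `w, v, g ∈ L²((-2,2))`):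
`‖w‖_{L²((-1,1))} ≤ C (1 + ‖v‖_{L²((-2,2))} + ‖g‖_{L²((-2,2))})`. -/
theorem stmt_4 : ∃ C : ℝ, 0 < C ∧
    ∀ w v g : ℝ → ℝ,
      MemLp w 2 (volume.restrict (Set.Ioo (-2 : ℝ) 2)) →
      MemLp v 2 (volume.restrict (Set.Ioo (-2 : ℝ) 2)) →
      MemLp g 2 (volume.restrict (Set.Ioo (-2 : ℝ) 2)) →
      (∀ φ : ℝ → ℝ, ContDiff ℝ (⊤ : ℕ∞) φ → HasCompactSupport φ →
        tsupport φ ⊆ Set.Ioo (-2 : ℝ) 2 →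
        ∫ x in Set.Ioo (-2 : ℝ) 2,
            (-(w x) * deriv φ x + (2 * w x + (w x) ^ 2) * φ x)
          = ∫ x in Set.Ioo (-2 : ℝ) 2, (-(v x) * deriv φ x + g x * φ x)) →
      Real.sqrt (∫ x in Set.Ioo (-1 : ℝ) 1, (w x) ^ 2)
        ≤ C * (1 + Real.sqrt (∫ x in Set.Ioo (-2 : ℝ) 2, (v x) ^ 2)
            + Real.sqrt (∫ x in Set.Ioo (-2 : ℝ) 2, (g x) ^ 2)) := by
  obtain ⟨ψ, hψ, hψc, hψU, hψ1⟩ := exists_smooth_cutoff_Ioo one_pos one_lt_two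
  have hφc : HasCompactSupport fun x => ψ x ^ 2 := hψc.comp_left (g := fun y => y ^ 2) (by simp)
  have hφU : tsupport (fun x => ψ x ^ 2) ⊆ Ioo (-2) 2 :=
    (tsupport_comp_subset (g := fun y : ℝ => y ^ 2) (by simp) ψ).trans hψU
  set K := ∫ x in Ioo (-2 : ℝ) 2, cutoffWeight ψ x
  have hK : 0 ≤ K := integral_nonneg (cutoffWeight_nonneg ψ)
  refine ⟨√(2 * K + 2), by positivity, fun w v g hw hv hg hweak => ?_⟩
  have henergy := integral_sq_mul_sq_le_of_riccati hw hv hg (hψ.of_le (by simp)) hψc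
    (hweak _ (hψ.pow 2) hφc hφU)
  have hlocal := setIntegral_le_setIntegral_mul_sq_of_eqOn_one (μ := volume) measurableSet_Ioo
    (Ioo_subset_Ioo (by norm_num) (by norm_num)) (fun x => sq_nonneg (w x))
    (hψ1.mono Ioo_subset_Icc_self)
    (hw.integrable_sq.mul_of_hasCompactSupport (by fun_prop) hφc)
  have ha : 0 ≤ ∫ x in Ioo (-2 : ℝ) 2, v x ^ 2 := integral_nonneg fun x => sq_nonneg (v x)
  have hb : 0 ≤ ∫ x in Ioo (-2 : ℝ) 2, g x ^ 2 := integral_nonneg fun x => sq_nonneg (g x)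
  exact sqrt_le_sqrt_mul_one_add_sqrt_add_sqrt (by positivity) ha hb (by nlinarith)
end

section
/- Let 2 ≤ r < ∞ and 1 ≤ p, q ≤ ∞ with 1/p + 1/q = 2/r. Then for every Schwartz function f : ℝ → ℝ: ‖f'‖²_{L^r} ≤ (r−1)·‖f‖_{L^p}·‖f''‖_{L^q}. -/
/-!
Write `∫ |f'|^r = ∫ (|f'|^(r-2) f') f'` and integrate by parts, using
`(|y|^(r-2) y)' = (r-1) |y|^(r-2)`: this gives `∫ |f'|^r = -(r-1) ∫ f |f'|^(r-2) f''`.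
Since `1/p + (r-2)/r + 1/q = 1`, Hölder's inequality for three factors bounds the right-hand
side by `(r-1) ‖f‖_p ‖f'‖_r^(r-2) ‖f''‖_q`; dividing by `‖f'‖_r^(r-2)`, which is finite, gives
the claim.
-/

open MeasureTheory Filter
open scoped ENNReal Topology

theorem hasDerivAt_abs_rpow_mul {s : ℝ} (hs : 0 ≤ s) (y : ℝ) :
    HasDerivAt (fun y : ℝ => |y| ^ s * y) ((s + 1) * |y| ^ s) y := by
  rcases eq_or_ne y 0 with rfl | hy
  · have hcont : Tendsto (fun z : ℝ => |z| ^ s) (𝓝[≠] 0) (𝓝 (|0| ^ s)) :=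
      ((continuous_abs.rpow_const fun _ => Or.inr hs).tendsto 0).mono_left nhdsWithin_le_nhds
    have hval : (s + 1) * |(0 : ℝ)| ^ s = |0| ^ s := by
      rcases hs.eq_or_lt with rfl | hs
      · simp
      · simp [Real.zero_rpow hs.ne']
    rw [hasDerivAt_iff_tendsto_slope, hval]
    refine hcont.congr' ?_
    filter_upwards [self_mem_nhdsWithin] with z hz
    simp [slope_def_field, mul_div_assoc, div_self (show z ≠ 0 from hz)]
  · have hy' : |y| ≠ 0 := abs_ne_zero.2 hy
    refine (((hasDerivAt_abs hy).rpow_const (Or.inl hy')).mul (hasDerivAt_id y)).congr_deriv ?_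
    calc (SignType.sign y : ℝ) * s * |y| ^ (s - 1) * y + |y| ^ s * 1
        = s * |y| ^ (s - 1) * (SignType.sign y * y) + |y| ^ s := by ring
      _ = (s + 1) * |y| ^ s := by
        rw [sign_mul_self, Real.rpow_sub_one hy']
        field_simp

theorem abs_rpow_mul_mul_self {s : ℝ} (hs : s + 2 ≠ 0) (y : ℝ) :
    |y| ^ s * y * y = |y| ^ (s + 2) := by
  rw [show s + 2 = s + (2 : ℕ) by norm_num,
    Real.rpow_add_natCast' (abs_nonneg y) (by exact_mod_cast hs), mul_assoc, pow_two,
    abs_mul_abs_self]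

theorem eLpNorm_mul_mul_le {α 𝕜 : Type*} [MeasurableSpace α] {μ : Measure α} [NormedRing 𝕜]
    {f g h : α → 𝕜} (hf : AEStronglyMeasurable f μ) (hg : AEStronglyMeasurable g μ)
    (hh : AEStronglyMeasurable h μ)
    {p q s t : ℝ≥0∞} (hpqs : p⁻¹ + q⁻¹ + s⁻¹ = t⁻¹) :
    eLpNorm (fun x => f x * g x * h x) t μ ≤ eLpNorm f p μ * eLpNorm g q μ * eLpNorm h s μ := by
  have : ENNReal.HolderTriple q s (q⁻¹ + s⁻¹)⁻¹ := .of q s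
  have : ENNReal.HolderTriple p (q⁻¹ + s⁻¹)⁻¹ t := ⟨by rw [inv_inv, ← add_assoc, hpqs]⟩
  calc eLpNorm (fun x => f x * g x * h x) t μ = eLpNorm (f • (g • h)) t μ := by
        simp only [smul_eq_mul, mul_assoc]; rfl
    _ ≤ eLpNorm f p μ * eLpNorm (g • h) (q⁻¹ + s⁻¹)⁻¹ μ :=
        eLpNorm_smul_le_mul_eLpNorm (hg.smul hh) hf
    _ ≤ eLpNorm f p μ * eLpNorm g q μ * eLpNorm h s μ := by
        rw [mul_assoc]; gcongr; exact eLpNorm_smul_le_mul_eLpNorm hh hg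

theorem eLpNorm_abs_rpow_le {α : Type*} [MeasurableSpace α] {μ : Measure α} (g : α → ℝ) {s : ℝ}
    (hs : 0 ≤ s) (a : ℝ≥0∞) :
    eLpNorm (fun x => |g x| ^ s) (a / ENNReal.ofReal s) μ ≤ eLpNorm g a μ ^ s := by
  rcases hs.eq_or_lt with rfl | hs
  · -- `a / 0 = ∞` unless `a = 0`; either way `(a / 0).toReal = 0`
    refine (eLpNorm_le_of_ae_bound (C := 1) (ae_of_all _ fun x => by simp)).trans_eq ?_
    simp
  · have hs' : ENNReal.ofReal s ≠ 0 := ENNReal.ofReal_pos.2 hs |>.ne'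
    have h := eLpNorm_norm_rpow (μ := μ) (p := a / ENNReal.ofReal s) g hs
    rw [ENNReal.div_mul_cancel hs' ENNReal.ofReal_ne_top] at h
    exact h.le

theorem inv_add_inv_ofReal_div_add_inv_eq_one {r : ℝ} (hr : 2 ≤ r) {p q : ℝ≥0∞}
    (hpq : 1 / p + 1 / q = 2 / ENNReal.ofReal r) :
    p⁻¹ + (ENNReal.ofReal r / ENNReal.ofReal (r - 2))⁻¹ + q⁻¹ = 1⁻¹ := by
  have hr0 : ENNReal.ofReal r ≠ 0 := (ENNReal.ofReal_pos.2 (by linarith)).ne'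
  have htwo : 2 + ENNReal.ofReal (r - 2) = ENNReal.ofReal r := by
    rw [← ENNReal.ofReal_ofNat 2, ← ENNReal.ofReal_add zero_le_two (by linarith), add_sub_cancel]
  rw [ENNReal.inv_div (Or.inl ENNReal.ofReal_ne_top) (Or.inr hr0), add_right_comm,
    ← one_div, ← one_div q, hpq, ENNReal.div_add_div_same, htwo,
    ENNReal.div_self hr0 ENNReal.ofReal_ne_top, inv_one]

theorem ENNReal.sq_le_of_rpow_le_mul_rpow_sub_two {N K : ℝ≥0∞} {r : ℝ} (hr : 2 ≤ r)
    (hN : N ≠ ∞) (h : N ^ r ≤ K * N ^ (r - 2)) : N ^ 2 ≤ K := by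
  rcases eq_or_ne N 0 with rfl | hN0
  · simp
  have hsplit : N ^ r = N ^ 2 * N ^ (r - 2) := by
    rw [← ENNReal.rpow_natCast, ← ENNReal.rpow_add _ _ hN0 hN]
    norm_num
  rw [hsplit] at h
  exact (ENNReal.mul_le_mul_iff_left (by simp [hN0, hN])
    (ENNReal.rpow_ne_top_of_nonneg (by linarith) hN)).1 h

theorem MeasureTheory.MemLp.eLpNorm_ofReal_rpow_eq_integral {α : Type*} [MeasurableSpace α]
    {μ : Measure α} {f : α → ℝ} {r : ℝ} (hf : MemLp f (ENNReal.ofReal r) μ) (hr : 0 < r) :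
    eLpNorm f (ENNReal.ofReal r) μ ^ r = ENNReal.ofReal (∫ x, |f x| ^ r ∂μ) := by
  rw [hf.eLpNorm_eq_integral_rpow_norm (by simpa using hr) ENNReal.ofReal_ne_top,
    ENNReal.toReal_ofReal hr.le, ENNReal.ofReal_rpow_of_nonneg (by positivity) hr.le,
    Real.rpow_inv_rpow (by positivity) hr.ne']
  rfl

namespace SchwartzMap

theorem exists_coe_eq_deriv {F : Type*} [NormedAddCommGroup F] [NormedSpace ℝ F]
    (f : 𝓢(ℝ, F)) : ∃ g : 𝓢(ℝ, F), ⇑g = deriv f :=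
  ⟨derivCLM ℝ F f, funext (derivCLM_apply ℝ f)⟩

theorem integral_abs_deriv_rpow (f : 𝓢(ℝ, ℝ)) {r : ℝ} (hr : 2 ≤ r) :
    ∫ x, |deriv f x| ^ r = -((r - 1) * ∫ x, f x * |deriv f x| ^ (r - 2) * deriv (deriv f) x) := by
  obtain ⟨g, hg⟩ := f.exists_coe_eq_deriv
  obtain ⟨g₂, hg₂⟩ := g.exists_coe_eq_deriv
  rw [← hg, ← hg₂]
  have hs : 0 ≤ r - 2 := by linarith
  have hw : MemLp (fun x => |g x| ^ (r - 2)) ∞ := by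
    simpa [ENNReal.top_div_of_ne_top, ENNReal.toReal_ofReal hs] using
      g.memLp_top.norm_rpow_div (ENNReal.ofReal (r - 2))
  have hu : MemLp (fun x => |g x| ^ (r - 2) * g x) ∞ := g.memLp_top.mul' (r := ∞) hw
  have hu' : MemLp (fun x => (r - 2 + 1) * |g x| ^ (r - 2) * g₂ x) ∞ := by
    simpa only [mul_assoc] using (g₂.memLp_top.mul' (r := ∞) hw).const_mul (r - 2 + 1)
  have hparts : ∫ x, |g x| ^ (r - 2) * g x * g x
      = -∫ x, (r - 2 + 1) * |g x| ^ (r - 2) * g₂ x * f x :=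
    integral_mul_deriv_eq_deriv_mul_of_integrable
      (fun x _ => (hasDerivAt_abs_rpow_mul hs (g x)).comp x (hg₂ ▸ g.hasDerivAt x))
      (fun x _ => hg ▸ f.hasDerivAt x) (g.integrable.mul_of_top_right hu)
      (f.integrable.mul_of_top_right hu') (f.integrable.mul_of_top_right hu)
  calc ∫ x, |g x| ^ r = ∫ x, |g x| ^ (r - 2) * g x * g x := by
        simp_rw [abs_rpow_mul_mul_self (by linarith : r - 2 + 2 ≠ 0), sub_add_cancel]
    _ = -((r - 1) * ∫ x, f x * |g x| ^ (r - 2) * g₂ x) := by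
        rw [hparts, ← integral_const_mul]
        congr 2 with x
        ring

theorem eLpNorm_deriv_rpow_le (f : 𝓢(ℝ, ℝ)) {r : ℝ} (hr : 2 ≤ r) :
    eLpNorm (deriv f) (ENNReal.ofReal r) volume ^ r ≤ ENNReal.ofReal (r - 1) *
      eLpNorm (fun x => f x * |deriv f x| ^ (r - 2) * deriv (deriv f) x) 1 volume := by
  set I := ∫ x, f x * |deriv f x| ^ (r - 2) * deriv (deriv f) x
  obtain ⟨g, hg⟩ := f.exists_coe_eq_deriv
  have hf₁ : MemLp (deriv f) (ENNReal.ofReal r) volume := hg ▸ g.memLp _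
  rw [hf₁.eLpNorm_ofReal_rpow_eq_integral (by linarith), integral_abs_deriv_rpow f hr,
    eLpNorm_one_eq_lintegral_enorm]
  calc ENNReal.ofReal (-((r - 1) * I)) ≤ ENNReal.ofReal (r - 1) * ‖I‖ₑ := by
        rw [Real.enorm_eq_ofReal_abs, ← ENNReal.ofReal_mul (by linarith)]
        exact ENNReal.ofReal_le_ofReal (by nlinarith [neg_abs_le I])
    _ ≤ _ := by gcongr; exact enorm_integral_le_lintegral_enorm _

end SchwartzMap

theorem stmt_9_general (r : ℝ) (hr : 2 ≤ r) (p q : ℝ≥0∞)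
    (hpq : 1 / p + 1 / q = 2 / ENNReal.ofReal r) :
    ∀ f : SchwartzMap ℝ ℝ,
      eLpNorm (deriv (⇑f)) (ENNReal.ofReal r) volume ^ 2
        ≤ ENNReal.ofReal (r - 1) * eLpNorm (⇑f) p volume
            * eLpNorm (deriv (deriv (⇑f))) q volume := by
  intro f
  have hparts := f.eLpNorm_deriv_rpow_le hr
  obtain ⟨g, hg⟩ := f.exists_coe_eq_deriv
  obtain ⟨g₂, hg₂⟩ := g.exists_coe_eq_deriv
  rw [← hg, ← hg₂] at hparts ⊢
  have hs : 0 ≤ r - 2 := by linarith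
  have hN := (g.memLp (ENNReal.ofReal r)).eLpNorm_ne_top
  apply ENNReal.sq_le_of_rpow_le_mul_rpow_sub_two hr hN
  calc eLpNorm g (ENNReal.ofReal r) volume ^ r
      ≤ ENNReal.ofReal (r - 1) * eLpNorm (fun x => f x * |g x| ^ (r - 2) * g₂ x) 1 volume := hparts
    _ ≤ ENNReal.ofReal (r - 1) * (eLpNorm f p volume *
          eLpNorm (fun x => |g x| ^ (r - 2)) (ENNReal.ofReal r / ENNReal.ofReal (r - 2)) volume *
          eLpNorm g₂ q volume) := by
        gcongr
        exact eLpNorm_mul_mul_le f.continuous.aestronglyMeasurable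
          (g.continuous.abs.rpow_const fun _ => Or.inr hs).aestronglyMeasurable
          g₂.continuous.aestronglyMeasurable (inv_add_inv_ofReal_div_add_inv_eq_one hr hpq)
    _ ≤ ENNReal.ofReal (r - 1) * (eLpNorm f p volume *
          eLpNorm g (ENNReal.ofReal r) volume ^ (r - 2) * eLpNorm g₂ q volume) := by
        gcongr
        exact eLpNorm_abs_rpow_le _ hs _
    _ = _ := by ring

/-- Elementary interpolation inequality with explicit constant:
for `2 ≤ r < ∞` and `1 ≤ p, q ≤ ∞` with `1/p + 1/q = 2/r`,
`‖f'‖²_{L^r} ≤ (r-1) ‖f‖_{L^p} ‖f''‖_{L^q}` for Schwartz `f`. -/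
theorem stmt_9 (r : ℝ) (hr : 2 ≤ r) (p q : ℝ≥0∞) (hp : 1 ≤ p) (hq : 1 ≤ q)
    (hpq : 1 / p + 1 / q = 2 / ENNReal.ofReal r) :
    ∀ f : SchwartzMap ℝ ℝ,
      eLpNorm (deriv (⇑f)) (ENNReal.ofReal r) volume ^ 2
        ≤ ENNReal.ofReal (r - 1) * eLpNorm (⇑f) p volume
            * eLpNorm (deriv (deriv (⇑f))) q volume :=
  stmt_9_general r hr p q hpq
end

section
/- Let 0 < s < 1, let 1 ≤ p, q ≤ ∞, and define r by 1/r = (1−s)/q + s/p. Then for every Schwartz function f : ℝ → ℝ: sup_{h>0} h^{−s}·‖f(·+h) − f‖_{L^r} ≤ 2^{1−s}·‖f‖_{L^q}^{1−s}·‖f'‖_{L^p}^{s}. -/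
/-!
Write `Δₕf = f(· + h) - f` and split `‖Δₕf‖ = ‖Δₕf‖ ^ (1 - s) * ‖Δₕf‖ ^ s`; Hölder with the
exponents `q / (1 - s)` and `p / s` gives `‖Δₕf‖_r ≤ ‖Δₕf‖_q ^ (1 - s) * ‖Δₕf‖_p ^ s`.
The first factor is at most `2 ‖f‖_q` by the triangle inequality and translation invariance.
The second is at most `h ‖f'‖_p`: `Δₕf(x) = ∫₀ʰ f'(x + t) dt`, and integrating translates over a
set `S` multiplies an `L^p` norm by at most the measure of `S` (Jensen on `S`, then Fubini).
-/

open MeasureTheory Set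
open scoped ENNReal

section Interpolation

variable {α E : Type*} [MeasurableSpace α] {μ : Measure α} [NormedAddCommGroup E]

theorem eLpNorm_le_eLpNorm_rpow_mul_eLpNorm_rpow {f : α → E} (hf : AEStronglyMeasurable f μ)
    {s : ℝ} (hs0 : 0 < s) (hs1 : s < 1) {p q r : ℝ≥0∞}
    (hr : 1 / r = ENNReal.ofReal (1 - s) / q + ENNReal.ofReal s / p) :
    eLpNorm f r μ ≤ eLpNorm f q μ ^ (1 - s) * eLpNorm f p μ ^ s := by
  have h1s : 0 < 1 - s := sub_pos.2 hs1
  have ha0 : ENNReal.ofReal (1 - s) ≠ 0 := ENNReal.ofReal_ne_zero_iff.2 h1s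
  have hb0 : ENNReal.ofReal s ≠ 0 := ENNReal.ofReal_ne_zero_iff.2 hs0
  have : ENNReal.HolderTriple (q / ENNReal.ofReal (1 - s)) (p / ENNReal.ofReal s) r := by
    constructor
    rw [ENNReal.inv_div (.inl ENNReal.ofReal_ne_top) (.inl ha0),
      ENNReal.inv_div (.inl ENNReal.ofReal_ne_top) (.inl hb0), ← one_div, hr]
  have hsplit : (fun x => ‖f x‖) = fun x => ‖f x‖ ^ (1 - s) * ‖f x‖ ^ s := by
    funext x
    rw [← Real.rpow_add' (norm_nonneg _) (by norm_num), sub_add_cancel, Real.rpow_one]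
  calc eLpNorm f r μ = eLpNorm (fun x => ‖f x‖ ^ (1 - s) * ‖f x‖ ^ s) r μ := by
        rw [← hsplit, eLpNorm_norm]
    _ ≤ 1 * eLpNorm (fun x => ‖f x‖ ^ (1 - s)) (q / ENNReal.ofReal (1 - s)) μ
          * eLpNorm (fun x => ‖f x‖ ^ s) (p / ENNReal.ofReal s) μ := by
        refine eLpNorm_le_eLpNorm_mul_eLpNorm'_of_norm
          (hf.norm.aemeasurable.pow_const _).aestronglyMeasurable
          (hf.norm.aemeasurable.pow_const _).aestronglyMeasurable (· * ·) 1
          (.of_forall fun x => ?_)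
        simp only [NNReal.coe_one, one_mul, norm_mul, le_refl]
    _ = eLpNorm f q μ ^ (1 - s) * eLpNorm f p μ ^ s := by
        rw [one_mul, eLpNorm_norm_rpow f h1s, eLpNorm_norm_rpow f hs0,
          ENNReal.div_mul_cancel ha0 ENNReal.ofReal_ne_top,
          ENNReal.div_mul_cancel hb0 ENNReal.ofReal_ne_top]

end Interpolation

theorem rpow_lintegral_le_measure_univ_rpow_mul {α : Type*} [MeasurableSpace α] {ν : Measure α}
    {F : α → ℝ≥0∞} (hF : AEMeasurable F ν) {P : ℝ} (hP : 1 ≤ P) :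
    (∫⁻ a, F a ∂ν) ^ P ≤ ν univ ^ (P - 1) * ∫⁻ a, F a ^ P ∂ν := by
  have hP0 : 0 < P := zero_lt_one.trans_le hP
  have hp : (1 : ℝ≥0∞) ≤ ENNReal.ofReal P := by simpa using ENNReal.ofReal_le_ofReal hP
  have hHolder := eLpNorm_le_eLpNorm_mul_rpow_measure_univ hp hF.aestronglyMeasurable
  rw [eLpNorm_one_eq_lintegral_enorm, eLpNorm_eq_lintegral_rpow_enorm_toReal
    (by positivity) ENNReal.ofReal_ne_top, ENNReal.toReal_ofReal hP0.le] at hHolder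
  simp only [enorm_eq_self, ENNReal.toReal_one] at hHolder
  calc (∫⁻ a, F a ∂ν) ^ P
      ≤ ((∫⁻ a, F a ^ P ∂ν) ^ (1 / P) * ν univ ^ (1 / 1 - 1 / P)) ^ P := by gcongr
    _ = ν univ ^ (P - 1) * ∫⁻ a, F a ^ P ∂ν := by
      rw [ENNReal.mul_rpow_of_nonneg _ _ hP0.le, ← ENNReal.rpow_mul, ← ENNReal.rpow_mul,
        one_div_mul_cancel hP0.ne', ENNReal.rpow_one, mul_comm]
      congr 2
      field_simp

section Translation

variable {G E : Type*} [AddCommGroup G] [MeasurableSpace G] [MeasurableAdd₂ G] {μ : Measure G}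
  [μ.IsAddLeftInvariant]

theorem eLpNorm_sub_comp_add_le_two_mul [NormedAddCommGroup E] {f : G → E}
    (hf : AEStronglyMeasurable f μ) {p : ℝ≥0∞} (hp : 1 ≤ p) (h : G) :
    eLpNorm (fun x => f (x + h) - f x) p μ ≤ 2 * eLpNorm f p μ := by
  have hτ := measurePreserving_add_right μ h
  calc eLpNorm (fun x => f (x + h) - f x) p μ
      ≤ eLpNorm (fun x => f (x + h)) p μ + eLpNorm f p μ :=
        eLpNorm_sub_le (hf.comp_measurePreserving hτ) hf hp
    _ = 2 * eLpNorm f p μ := by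
        rw [show eLpNorm (fun x => f (x + h)) p μ = eLpNorm f p μ from
          eLpNorm_comp_measurePreserving hf hτ, two_mul]

theorem eLpNormEssSup_setLIntegral_comp_add_le {g : G → ℝ≥0∞} (S : Set G) :
    eLpNormEssSup (fun x => ∫⁻ t in S, g (x + t) ∂μ) μ ≤ μ S * eLpNormEssSup g μ := by
  refine eLpNormEssSup_le_of_ae_enorm_bound (.of_forall fun x => ?_)
  have hbound : ∀ᵐ t ∂μ, g (x + t) ≤ eLpNormEssSup g μ :=
    (measurePreserving_add_left μ x).quasiMeasurePreserving.ae (ae_le_eLpNormEssSup (f := g))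
  calc ‖∫⁻ t in S, g (x + t) ∂μ‖ₑ ≤ ∫⁻ _ in S, eLpNormEssSup g μ ∂μ :=
        lintegral_mono_ae (ae_restrict_of_ae hbound)
    _ = μ S * eLpNormEssSup g μ := by rw [setLIntegral_const, mul_comm]

theorem eLpNorm_setLIntegral_comp_add_le [SFinite μ] {g : G → ℝ≥0∞} (hg : Measurable g)
    {p : ℝ≥0∞} (hp : 1 ≤ p) (S : Set G) :
    eLpNorm (fun x => ∫⁻ t in S, g (x + t) ∂μ) p μ ≤ μ S * eLpNorm g p μ := by
  rcases eq_or_ne p ∞ with rfl | hp_top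
  · simpa only [eLpNorm_exponent_top] using eLpNormEssSup_setLIntegral_comp_add_le S
  have hp0 : p ≠ 0 := (zero_lt_one.trans_le hp).ne'
  set P := p.toReal
  have hP : 1 ≤ P := by simpa using ENNReal.toReal_mono hp_top hp
  have hgP : Measurable fun z : G × G => g (z.1 + z.2) ^ P := (hg.comp measurable_add).pow_const P
  have hfubini : ∫⁻ x, ∫⁻ t in S, g (x + t) ^ P ∂μ ∂μ = μ S * ∫⁻ y, g y ^ P ∂μ := by
    rw [lintegral_lintegral_swap hgP.aemeasurable]
    simp_rw [lintegral_add_right_eq_self (fun y => g y ^ P)]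
    rw [setLIntegral_const, mul_comm]
  have hmain : ∫⁻ x, (∫⁻ t in S, g (x + t) ∂μ) ^ P ∂μ ≤ μ S ^ P * ∫⁻ y, g y ^ P ∂μ :=
    calc ∫⁻ x, (∫⁻ t in S, g (x + t) ∂μ) ^ P ∂μ
        ≤ ∫⁻ x, μ S ^ (P - 1) * ∫⁻ t in S, g (x + t) ^ P ∂μ ∂μ := by
          refine lintegral_mono fun x => ?_
          simpa using rpow_lintegral_le_measure_univ_rpow_mul
            (hg.comp (measurable_const_add x)).aemeasurable (ν := μ.restrict S) hP
      _ = μ S ^ (P - 1) * (μ S * ∫⁻ y, g y ^ P ∂μ) := by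
          rw [lintegral_const_mul _ hgP.lintegral_prod_right', hfubini]
      _ = μ S ^ P * ∫⁻ y, g y ^ P ∂μ := by
          have := ENNReal.rpow_add_of_nonneg (x := μ S) (P - 1) 1 (sub_nonneg.2 hP) zero_le_one
          rw [sub_add_cancel, ENNReal.rpow_one] at this
          rw [this, mul_assoc]
  rw [eLpNorm_eq_lintegral_rpow_enorm_toReal hp0 hp_top,
    eLpNorm_eq_lintegral_rpow_enorm_toReal hp0 hp_top]
  simp only [enorm_eq_self]
  calc (∫⁻ x, (∫⁻ t in S, g (x + t) ∂μ) ^ P ∂μ) ^ (1 / P)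
      ≤ (μ S ^ P * ∫⁻ y, g y ^ P ∂μ) ^ (1 / P) := by gcongr
    _ = μ S * (∫⁻ y, g y ^ P ∂μ) ^ (1 / P) := by
      rw [ENNReal.mul_rpow_of_nonneg _ _ (by positivity), ← ENNReal.rpow_mul,
        mul_one_div_cancel (by positivity), ENNReal.rpow_one]

end Translation

section Derivative

variable {E : Type*} [NormedAddCommGroup E] [NormedSpace ℝ E] [CompleteSpace E] {f : ℝ → E}

theorem enorm_sub_le_setLIntegral_enorm_deriv (hf : ContDiff ℝ 1 f) (x : ℝ) {h : ℝ} (hh : 0 ≤ h) :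
    ‖f (x + h) - f x‖ₑ ≤ ∫⁻ t in Ioc 0 h, ‖deriv f (x + t)‖ₑ := by
  have hftc : ∫ t in (0 : ℝ)..h, deriv f (x + t) = f (x + h) - f x := by
    rw [intervalIntegral.integral_comp_add_left (deriv f) x, add_zero,
      intervalIntegral.integral_deriv_eq_sub (fun t _ => hf.differentiable one_ne_zero t)
        (hf.continuous_deriv_one.intervalIntegrable _ _)]
  rw [← hftc, intervalIntegral.integral_of_le hh]
  exact enorm_integral_le_lintegral_enorm _

theorem eLpNorm_sub_comp_add_le_mul_eLpNorm_deriv (hf : ContDiff ℝ 1 f) {p : ℝ≥0∞} (hp : 1 ≤ p)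
    {h : ℝ} (hh : 0 ≤ h) :
    eLpNorm (fun x => f (x + h) - f x) p volume ≤ ENNReal.ofReal h * eLpNorm (deriv f) p volume :=
  calc eLpNorm (fun x => f (x + h) - f x) p volume
      ≤ eLpNorm (fun x => ∫⁻ t in Ioc 0 h, ‖deriv f (x + t)‖ₑ) p volume :=
        eLpNorm_mono_enorm fun x => by
          simpa only [enorm_eq_self] using enorm_sub_le_setLIntegral_enorm_deriv hf x hh
    _ ≤ volume (Ioc 0 h) * eLpNorm (fun y => ‖deriv f y‖ₑ) p volume :=
        eLpNorm_setLIntegral_comp_add_le hf.continuous_deriv_one.enorm.measurable hp _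
    _ = ENNReal.ofReal h * eLpNorm (deriv f) p volume := by
        rw [Real.volume_Ioc, sub_zero, eLpNorm_enorm]

end Derivative

/-- Besov-type interpolation: for `0 < s < 1`, `1 ≤ p, q ≤ ∞` and
`1/r = (1-s)/q + s/p`, the modulus of continuity satisfies
`h^{-s} ‖f(·+h) - f‖_{L^r} ≤ 2^{1-s} ‖f‖_{L^q}^{1-s} ‖f'‖_{L^p}^{s}` for all `h > 0`. -/
theorem stmt_10 (s : ℝ) (hs0 : 0 < s) (hs1 : s < 1)
    (p q : ℝ≥0∞) (hp : 1 ≤ p) (hq : 1 ≤ q) (r : ℝ≥0∞)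
    (hr : 1 / r = ENNReal.ofReal (1 - s) / q + ENNReal.ofReal s / p) :
    ∀ f : SchwartzMap ℝ ℝ, ∀ h : ℝ, 0 < h →
      ENNReal.ofReal (h ^ (-s)) * eLpNorm (fun x => f (x + h) - f x) r volume
        ≤ ENNReal.ofReal (2 ^ (1 - s)) * eLpNorm (⇑f) q volume ^ (1 - s)
            * eLpNorm (deriv (⇑f)) p volume ^ s := by
  intro f h hh
  have hfm : AEStronglyMeasurable (⇑f) volume := f.continuous.aestronglyMeasurable
  have hΔm : AEStronglyMeasurable (fun x => f (x + h) - f x) volume :=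
    ((f.continuous.comp (continuous_add_const h)).sub f.continuous).aestronglyMeasurable
  have h1s : 0 ≤ 1 - s := (sub_pos.2 hs1).le
  have hscale : ENNReal.ofReal (h ^ (-s)) * ENNReal.ofReal h ^ s = 1 := by
    rw [ENNReal.ofReal_rpow_of_pos hh, ← ENNReal.ofReal_mul (by positivity),
      ← Real.rpow_add hh, neg_add_cancel, Real.rpow_zero, ENNReal.ofReal_one]
  have htwo : (2 : ℝ≥0∞) ^ (1 - s) = ENNReal.ofReal (2 ^ (1 - s)) := by
    rw [← ENNReal.ofReal_rpow_of_pos two_pos, ENNReal.ofReal_ofNat]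
  calc ENNReal.ofReal (h ^ (-s)) * eLpNorm (fun x => f (x + h) - f x) r volume
      ≤ ENNReal.ofReal (h ^ (-s)) * ((2 * eLpNorm (⇑f) q volume) ^ (1 - s)
          * (ENNReal.ofReal h * eLpNorm (deriv (⇑f)) p volume) ^ s) := by
        grw [eLpNorm_le_eLpNorm_rpow_mul_eLpNorm_rpow hΔm hs0 hs1 hr,
          eLpNorm_sub_comp_add_le_two_mul hfm hq,
          eLpNorm_sub_comp_add_le_mul_eLpNorm_deriv (f.smooth 1) hp hh.le]
    _ = ENNReal.ofReal (2 ^ (1 - s)) * eLpNorm (⇑f) q volume ^ (1 - s)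
          * eLpNorm (deriv (⇑f)) p volume ^ s := by
        rw [ENNReal.mul_rpow_of_nonneg _ _ h1s, ENNReal.mul_rpow_of_nonneg _ _ hs0.le, htwo]
        calc _ = ENNReal.ofReal (h ^ (-s)) * ENNReal.ofReal h ^ s * (ENNReal.ofReal (2 ^ (1 - s))
              * eLpNorm (⇑f) q volume ^ (1 - s) * eLpNorm (deriv (⇑f)) p volume ^ s) := by ring
          _ = _ := by rw [hscale, one_mul]
end
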